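/- arXiv:2505.12503 — 2 statements merged into one kernel-verified Lean document; each statement's English description precedes it below -/
import Mathlib

section
/- In an acyclic Petri net with initial marking M₀ and incidence matrix C, if y : T → ℕ satisfies M₀ + C·y ≥ 0 componentwise, then there exists a firing sequence σ enabled at M₀ whose Parikh vector is y_σ = y (the state equation is sufficient for reachability in acyclic nets). -/
/-- Firing relation of a Petri net. -/
inductive Reaches {P T : Type*} (Pre Post : P → T → ℕ) : (P → ℕ) → List T → (P → ℕ) → Prop
  | nil (M : P → ℕ) : Reaches Pre Post M [] M
  | cons {M M' : P → ℕ} {t : T} {σ : List T} :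
      (∀ p, Pre p t ≤ M p) →
      Reaches Pre Post (fun p => M p + Post p t - Pre p t) σ M' →
      Reaches Pre Post M (t :: σ) M'

/-- Edge relation of the directed bipartite graph of a Petri net. -/
def NetEdge {P T : Type*} (Pre Post : P → T → ℕ) : (P ⊕ T) → (P ⊕ T) → Prop
  | Sum.inl p, Sum.inr t => 0 < Pre p t
  | Sum.inr t, Sum.inl p => 0 < Post p t
  | _, _ => False

private lemma aux_state_eq {P T : Type*} [Fintype T] [DecidableEq T]
    (Pre Post : P → T → ℕ)
    (hacyclic : ∀ x : P ⊕ T, ¬ Relation.TransGen (NetEdge Pre Post) x x) :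
    ∀ n (M₀ M : P → ℕ) (y : T → ℕ), (∑ t, y t) = n →
      (∀ p, (M p : ℤ) = (M₀ p : ℤ) +
        ∑ t : T, (y t : ℤ) * ((Post p t : ℤ) - (Pre p t : ℤ))) →
      ∃ σ : List T, Reaches Pre Post M₀ σ M ∧ ∀ t : T, σ.count t = y t := by
  intro n
  induction n using Nat.strong_induction_on with
  | _ n ih =>
    intro M₀ M y hsum hstate
    rcases Nat.eq_zero_or_pos n with hn | hn
    · subst hn
      have hy : ∀ t, y t = 0 := by
        intro t
        exact Finset.sum_eq_zero_iff.mp hsum t (Finset.mem_univ t)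
      have hM : M = M₀ := by
        funext p
        have := hstate p
        simp [hy] at this
        exact_mod_cast this
      refine ⟨[], ?_, fun t => by simp [hy t]⟩
      rw [hM]
      exact Reaches.nil M₀
    · -- find a transition in the support of y that is minimal in topological order
      set r : T → T → Prop := fun a b =>
        Relation.TransGen (NetEdge Pre Post) (Sum.inr a) (Sum.inr b) with hr
      haveI : IsTrans T r := ⟨fun _ _ _ h1 h2 => h1.trans h2⟩
      haveI : IsIrrefl T r := ⟨fun a h => hacyclic _ h⟩
      have hwf : WellFounded r := Finite.wellFounded_of_trans_of_irrefl r
      have hSne : {t : T | 0 < y t}.Nonempty := by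
        by_contra h
        rw [Set.not_nonempty_iff_eq_empty] at h
        have h0 : ∀ t, y t = 0 := fun t => by
          by_contra ht
          exact (Set.eq_empty_iff_forall_notMem.mp h t) (Nat.pos_of_ne_zero ht)
        have : ∑ t : T, y t = 0 := Finset.sum_eq_zero fun t _ => h0 t
        omega
      obtain ⟨t, htS, hmin⟩ := hwf.has_min {t : T | 0 < y t} hSne
      have hyt : 0 < y t := htS
      -- t is enabled at M₀
      have henabled : ∀ p, Pre p t ≤ M₀ p := by
        intro p
        rcases Nat.eq_zero_or_pos (Pre p t) with hp | hp
        · omega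
        · have hpost : ∀ t', y t' * Post p t' = 0 := by
            intro t'
            rcases Nat.eq_zero_or_pos (y t') with h1 | h1
            · simp [h1]
            rcases Nat.eq_zero_or_pos (Post p t') with h2 | h2
            · simp [h2]
            exfalso
            have e1 : NetEdge Pre Post (Sum.inr t') (Sum.inl p) := h2
            have e2 : NetEdge Pre Post (Sum.inl p) (Sum.inr t) := hp
            exact hmin t' h1 (Relation.TransGen.head e1 (Relation.TransGen.single e2))
          have hsum0 : ∑ t', (y t' : ℤ) * (Post p t' : ℤ) = 0 :=
            Finset.sum_eq_zero fun t' _ => by exact_mod_cast hpost t'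
          have hsplit : ∑ t', (y t' : ℤ) * ((Post p t' : ℤ) - (Pre p t' : ℤ)) =
              (∑ t', (y t' : ℤ) * (Post p t' : ℤ)) -
                ∑ t', (y t' : ℤ) * (Pre p t' : ℤ) := by
            rw [← Finset.sum_sub_distrib]
            exact Finset.sum_congr rfl fun t' _ => by ring
          have hle : (y t : ℤ) * (Pre p t : ℤ) ≤ ∑ t', (y t' : ℤ) * (Pre p t' : ℤ) :=
            Finset.single_le_sum (f := fun t' => (y t' : ℤ) * (Pre p t' : ℤ))
              (fun t' _ => by positivity) (Finset.mem_univ t)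
          have hMp : (0 : ℤ) ≤ M p := Int.natCast_nonneg _
          have h1 : (1 : ℤ) ≤ (y t : ℤ) := by exact_mod_cast hyt
          have hst := hstate p
          rw [hsplit, hsum0] at hst
          have : (Pre p t : ℤ) ≤ (M₀ p : ℤ) := by nlinarith
          exact_mod_cast this
      -- fire t
      set M₁ : P → ℕ := fun p => M₀ p + Post p t - Pre p t with hM₁
      set y' : T → ℕ := Function.update y t (y t - 1) with hy'
      have hy'eq : ∀ t', t' ≠ t → y' t' = y t' := fun t' h => Function.update_of_ne h _ _
      have hy't : y' t = y t - 1 := Function.update_self _ _ _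
      have hsum' : ∑ t', y' t' = n - 1 := by
        have h1 : ∑ t', y' t' = y t - 1 + ∑ t' ∈ Finset.univ \ {t}, y t' :=
          Finset.sum_update_of_mem (Finset.mem_univ t) y (y t - 1)
        have h2 : y t + ∑ t' ∈ Finset.univ \ {t}, y t' = n := by
          rw [← hsum, Finset.sdiff_singleton_eq_erase, Finset.add_sum_erase]
          exact Finset.mem_univ t
        omega
      have hstate' : ∀ p, (M p : ℤ) = (M₁ p : ℤ) +
          ∑ t' : T, (y' t' : ℤ) * ((Post p t' : ℤ) - (Pre p t' : ℤ)) := by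
        intro p
        have hc : (M₁ p : ℤ) = (M₀ p : ℤ) + (Post p t : ℤ) - (Pre p t : ℤ) := by
          have : Pre p t ≤ M₀ p + Post p t := le_trans (henabled p) (Nat.le_add_right _ _)
          simp only [hM₁]
          push_cast [Nat.cast_sub this]
          ring
        have hdiff : ∑ t', ((y t' : ℤ) * ((Post p t' : ℤ) - (Pre p t' : ℤ)) -
            (y' t' : ℤ) * ((Post p t' : ℤ) - (Pre p t' : ℤ))) =
            (Post p t : ℤ) - (Pre p t : ℤ) := by
          rw [Fintype.sum_eq_single t]
          · rw [hy't]
            have : ((y t - 1 : ℕ) : ℤ) = (y t : ℤ) - 1 := by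
              push_cast [Nat.cast_sub hyt]; ring
            rw [this]; ring
          · intro t' ht'
            rw [hy'eq t' ht']; ring
        rw [Finset.sum_sub_distrib] at hdiff
        have := hstate p
        linarith
      obtain ⟨σ', hre, hcount⟩ := ih (n - 1) (by omega) M₁ M y' hsum' hstate'
      refine ⟨t :: σ', Reaches.cons henabled hre, fun t'' => ?_⟩
      by_cases h : t'' = t
      · subst h
        simp [List.count_cons, hcount t'', hy't]
        omega
      · simp [List.count_cons, hcount t'', hy'eq t'' h, Ne.symm h]

/-- In an acyclic Petri net, the state equation is sufficient for reachability: if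
`M = M₀ + C·y ≥ 0` for `y : T → ℕ`, then there is a firing sequence `σ` enabled at `M₀`
with firing vector `y` reaching `M`. -/
theorem acyclic_state_equation_sufficient {P T : Type*} [Fintype T] [DecidableEq T]
    (Pre Post : P → T → ℕ)
    (hacyclic : ∀ x : P ⊕ T, ¬ Relation.TransGen (NetEdge Pre Post) x x)
    (M₀ M : P → ℕ) (y : T → ℕ)
    (hstate : ∀ p, (M p : ℤ) = (M₀ p : ℤ) +
      ∑ t : T, (y t : ℤ) * ((Post p t : ℤ) - (Pre p t : ℤ))) :
    ∃ σ : List T, Reaches Pre Post M₀ σ M ∧ ∀ t : T, σ.count t = y t :=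
  aux_state_eq Pre Post hacyclic (∑ t, y t) M₀ M y rfl hstate
end

section
/- Every basis marking is reachable: if there is a path M₀ →^{(t₁,y₁)} M₁ →^{(t₂,y₂)} … →^{(t_n,y_n)} M_n in the basis reachability graph, where each edge satisfies y_i ∈ Y_min(M_{i−1}, t_i) and M_i = M_{i−1} + C·y_i + C(·,t_i), then there exists a firing sequence σ = σ₁t₁σ₂t₂…σ_nt_n with σ_i ∈ T_I*, y_{σ_i} = y_i, enabled at M₀ in the Petri net and reaching M_n (one direction of Proposition 1). -/
/-- Explanation vectors: firing vectors of implicit sequences from `M` enabling `t`. -/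
def ExplanationVectors {P T : Type*} [DecidableEq T] (Pre Post : P → T → ℕ)
    (TI : Set T) (M : P → ℕ) (t : T) : Set (T → ℕ) :=
  {y | ∃ (σ : List T) (M' : P → ℕ), (∀ t' ∈ σ, t' ∈ TI) ∧
    Reaches Pre Post M σ M' ∧ (∀ p, Pre p t ≤ M' p) ∧ ∀ t' : T, σ.count t' = y t'}

/-- Minimal explanation vectors `Y_min(M,t)`. -/
def Ymin {P T : Type*} [DecidableEq T] (Pre Post : P → T → ℕ)
    (TI : Set T) (M : P → ℕ) (t : T) : Set (T → ℕ) :=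
  {y ∈ ExplanationVectors Pre Post TI M t |
    ∀ y' ∈ ExplanationVectors Pre Post TI M t, y' ≤ y → y' = y}

/-!
An explanation vector `y ∈ Y_min(M, t)` comes with an implicit sequence `σ` reaching a marking
that enables `t`. By the state equation, firing `t` there yields `M + C · y + C(·, t)`, which is
the next basis marking; the firing sequences of consecutive edges then concatenate.
-/

namespace Reaches

variable {P T : Type*} {Pre Post : P → T → ℕ}

theorem append {M M' M'' : P → ℕ} {σ τ : List T} (h₁ : Reaches Pre Post M σ M')
    (h₂ : Reaches Pre Post M' τ M'') : Reaches Pre Post M (σ ++ τ) M'' := by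
  induction h₁ with
  | nil => exact h₂
  | cons hen _ ih => exact cons hen (ih h₂)

theorem singleton {M : P → ℕ} {t : T} (hen : ∀ p, Pre p t ≤ M p) :
    Reaches Pre Post M [t] (fun p => M p + Post p t - Pre p t) :=
  cons hen (nil _)

theorem flatten_ofFn {n : ℕ} {M : Fin (n + 1) → P → ℕ} {σs : Fin n → List T}
    (h : ∀ i, Reaches Pre Post (M i.castSucc) (σs i) (M i.succ)) :
    Reaches Pre Post (M 0) (List.ofFn σs).flatten (M (Fin.last n)) := by
  induction n with
  | zero => exact nil _
  | succ n ih =>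
    rw [List.ofFn_succ, List.flatten_cons, ← Fin.succ_last]
    exact (h 0).append (ih (M := fun i => M i.succ) fun i => Fin.succ_castSucc i ▸ h i.succ)

/-- The state equation `M' = M + C · y_σ`, read in `ℤ` where subtraction does not truncate. -/
theorem state_equation [Fintype T] [DecidableEq T] {M M' : P → ℕ} {σ : List T}
    (h : Reaches Pre Post M σ M') (p : P) :
    (M' p : ℤ) = M p + ∑ t : T, (σ.count t : ℤ) * ((Post p t : ℤ) - Pre p t) := by
  induction h with
  | nil => simp
  | @cons M M' t σ hen _ ih =>
    have hfire : ((M p + Post p t - Pre p t : ℕ) : ℤ) = M p + Post p t - Pre p t := by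
      push_cast [Nat.cast_sub ((hen p).trans (Nat.le_add_right _ _))]; ring
    simp only [ih, hfire, List.count_cons, beq_iff_eq, Nat.cast_add, Nat.cast_ite, Nat.cast_one,
      Nat.cast_zero, add_mul, ite_mul, one_mul, zero_mul, Finset.sum_add_distrib,
      Finset.sum_ite_eq, Finset.mem_univ, if_true]
    ring

end Reaches

theorem exists_reaches_of_mem_explanationVectors {P T : Type*} [Fintype T] [DecidableEq T]
    {Pre Post : P → T → ℕ} {TI : Set T} {M M'' : P → ℕ} {t : T} {y : T → ℕ}
    (hy : y ∈ ExplanationVectors Pre Post TI M t)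
    (hedge : ∀ p, (M'' p : ℤ) = M p + (∑ t' : T, (y t' : ℤ) * ((Post p t' : ℤ) - Pre p t')) +
      ((Post p t : ℤ) - Pre p t)) :
    ∃ σ : List T, (∀ t' ∈ σ, t' ∈ TI) ∧ (∀ t', σ.count t' = y t') ∧
      Reaches Pre Post M (σ ++ [t]) M'' := by
  obtain ⟨σ, M', hσTI, hσ, hen, hcount⟩ := hy
  refine ⟨σ, hσTI, hcount, hσ.append ?_⟩
  convert Reaches.singleton (Pre := Pre) (Post := Post) hen using 1
  funext p
  have hfire : ((M' p + Post p t - Pre p t : ℕ) : ℤ) = M'' p := by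
    push_cast [Nat.cast_sub ((hen p).trans (Nat.le_add_right _ _))]
    simp only [hedge, hσ.state_equation, hcount]
    ring
  exact_mod_cast hfire.symm

theorem basis_marking_reachable_general {P T : Type*} [Fintype T] [DecidableEq T]
    (Pre Post : P → T → ℕ) (TI : Set T)
    (n : ℕ) (M : Fin (n + 1) → (P → ℕ)) (ts : Fin n → T) (ys : Fin n → (T → ℕ))
    (hymin : ∀ i : Fin n, ys i ∈ Ymin Pre Post TI (M i.castSucc) (ts i))
    (hedge : ∀ (i : Fin n) (p : P), ((M i.succ) p : ℤ) = ((M i.castSucc) p : ℤ) +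
      (∑ t : T, (ys i t : ℤ) * ((Post p t : ℤ) - (Pre p t : ℤ))) +
      ((Post p (ts i) : ℤ) - (Pre p (ts i) : ℤ))) :
    ∃ σs : Fin n → List T,
      (∀ i, ∀ t ∈ σs i, t ∈ TI) ∧
      (∀ (i : Fin n) (t : T), (σs i).count t = ys i t) ∧
      Reaches Pre Post (M 0)
        ((List.ofFn (fun i : Fin n => σs i ++ [ts i])).flatten) (M (Fin.last n)) := by
  choose σs hTI hcount hreach using fun i =>
    exists_reaches_of_mem_explanationVectors (hymin i).1 (hedge i)
  exact ⟨σs, hTI, hcount, Reaches.flatten_ofFn hreach⟩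

/-- One direction of Proposition 1: every path in the basis reachability graph
corresponds to a firing sequence `σ₁t₁σ₂t₂…σₙtₙ` enabled at `M₀` reaching the final
basis marking, the `σᵢ` being implicit sequences with firing vectors `yᵢ`. -/
theorem basis_marking_reachable {P T : Type*} [Fintype T] [DecidableEq T]
    (Pre Post : P → T → ℕ) (TE TI : Set T) (hpart : TE = TIᶜ)
    (n : ℕ) (M : Fin (n + 1) → (P → ℕ)) (ts : Fin n → T) (ys : Fin n → (T → ℕ))
    (htE : ∀ i, ts i ∈ TE)
    (hymin : ∀ i : Fin n, ys i ∈ Ymin Pre Post TI (M i.castSucc) (ts i))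
    (hedge : ∀ (i : Fin n) (p : P), ((M i.succ) p : ℤ) = ((M i.castSucc) p : ℤ) +
      (∑ t : T, (ys i t : ℤ) * ((Post p t : ℤ) - (Pre p t : ℤ))) +
      ((Post p (ts i) : ℤ) - (Pre p (ts i) : ℤ))) :
    ∃ σs : Fin n → List T,
      (∀ i, ∀ t ∈ σs i, t ∈ TI) ∧
      (∀ (i : Fin n) (t : T), (σs i).count t = ys i t) ∧
      Reaches Pre Post (M 0)
        ((List.ofFn (fun i : Fin n => σs i ++ [ts i])).flatten) (M (Fin.last n)) :=
  basis_marking_reachable_general Pre Post TI n M ts ys hymin hedge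
end
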